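/- For every integer n ≥ 2 and every u ∈ ℤ², there exists an injective but not surjective map g from B_u \ H_u into H_u \ {u} such that d(u, g(v)) ≤ d(u,v) for all v ∈ B_u \ H_u (obtained by folding the corners of B_u back into H_u). -/

import Mathlib

/-- Manhattan distance on the integer lattice ℤ². -/
def manhattan (u v : ℤ × ℤ) : ℤ := |u.1 - v.1| + |u.2 - v.2|

/-- The ball B_u : points v with 1 ≤ d(u,v) ≤ 2(n−1). -/
noncomputable def ball (n : ℤ) (u : ℤ × ℤ) : Finset (ℤ × ℤ) :=
  (Finset.Icc (u.1 - 2 * (n - 1)) (u.1 + 2 * (n - 1)) ×ˢ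
    Finset.Icc (u.2 - 2 * (n - 1)) (u.2 + 2 * (n - 1))).filter
    (fun v => 1 ≤ manhattan u v ∧ manhattan u v ≤ 2 * (n - 1))

/-- H_u : the (2n−1)×(2n−1) lattice centered at u. -/
noncomputable def centeredSquare (n : ℤ) (u : ℤ × ℤ) : Finset (ℤ × ℤ) :=
  Finset.Icc (u - (n - 1, n - 1)) (u + (n - 1, n - 1))

/-!
Write `v - u = (x, y)`. The set `B_u \ H_u` consists of four arms, e.g. the right arm
`n ≤ x`, `|x| + |y| ≤ 2(n-1)`. Reflecting the right arm across the line `x = n - 1/2`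
(that is, `x ↦ 2n - 1 - x`) moves it into `H_u` without increasing `|x|`, and lands in the
open cone `|y| < x`, because `|y| ≤ 2(n-1) - x`. The other arms are handled symmetrically and
land in the other three open cones, so the reflections can be undone, and no image lies on a
diagonal through `u`; in particular `u + (1, 1)` is missed.
-/

def fold (n : ℤ) (u v : ℤ × ℤ) : ℤ × ℤ :=
  if n ≤ v.1 - u.1 then (u.1 + (2 * n - 1) - (v.1 - u.1), v.2)
  else if v.1 - u.1 ≤ -n then (u.1 - (2 * n - 1) - (v.1 - u.1), v.2)
  else if n ≤ v.2 - u.2 then (v.1, u.2 + (2 * n - 1) - (v.2 - u.2))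
  else (v.1, u.2 - (2 * n - 1) - (v.2 - u.2))

def unfold (n : ℤ) (u w : ℤ × ℤ) : ℤ × ℤ :=
  if (w.2 - u.2).natAbs < w.1 - u.1 then (u.1 + (2 * n - 1) - (w.1 - u.1), w.2)
  else if (w.2 - u.2).natAbs < u.1 - w.1 then (u.1 - (2 * n - 1) - (w.1 - u.1), w.2)
  else if (w.1 - u.1).natAbs < w.2 - u.2 then (w.1, u.2 + (2 * n - 1) - (w.2 - u.2))
  else (w.1, u.2 - (2 * n - 1) - (w.2 - u.2))

-- Everything below is phrased with `Int.natAbs`, which `omega` understands, rather than `|·|`.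
lemma manhattan_eq_natAbs (u v : ℤ × ℤ) :
    manhattan u v = ((u.1 - v.1).natAbs + (u.2 - v.2).natAbs : ℤ) := by
  simp only [manhattan, Int.abs_eq_natAbs]

section

variable {n : ℤ} {u v w : ℤ × ℤ}

lemma mem_ball_sdiff_centeredSquare :
    v ∈ ball n u \ centeredSquare n u ↔
      1 ≤ ((u.1 - v.1).natAbs + (u.2 - v.2).natAbs : ℤ) ∧
      ((u.1 - v.1).natAbs + (u.2 - v.2).natAbs : ℤ) ≤ 2 * (n - 1) ∧
      (n ≤ (v.1 - u.1).natAbs ∨ n ≤ (v.2 - u.2).natAbs) := by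
  simp only [Finset.mem_sdiff, ball, centeredSquare, Finset.mem_filter, Finset.mem_product,
    Finset.mem_Icc, manhattan_eq_natAbs, Prod.le_def, Prod.fst_sub, Prod.snd_sub, Prod.fst_add,
    Prod.snd_add]
  omega

lemma mem_centeredSquare_erase :
    w ∈ (centeredSquare n u).erase u ↔
      (w.1 ≠ u.1 ∨ w.2 ≠ u.2) ∧ (w.1 - u.1).natAbs ≤ n - 1 ∧ (w.2 - u.2).natAbs ≤ n - 1 := by
  simp only [Finset.mem_erase, centeredSquare, Finset.mem_Icc, Prod.le_def, Prod.fst_sub,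
    Prod.snd_sub, Prod.fst_add, Prod.snd_add, ne_eq, Prod.ext_iff]
  omega

lemma mapsTo_fold :
    Set.MapsTo (fold n u) ↑(ball n u \ centeredSquare n u) ↑((centeredSquare n u).erase u) := by
  intro v hv
  rw [Finset.mem_coe, mem_ball_sdiff_centeredSquare] at hv
  rw [Finset.mem_coe, mem_centeredSquare_erase]
  unfold fold
  split_ifs <;> omega

lemma leftInvOn_unfold_fold :
    Set.LeftInvOn (unfold n u) (fold n u) ↑(ball n u \ centeredSquare n u) := by
  intro v hv
  rw [Finset.mem_coe, mem_ball_sdiff_centeredSquare] at hv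
  unfold fold
  split_ifs <;> unfold unfold <;> split_ifs <;> ext <;> omega

lemma natAbs_fold_ne (hv : v ∈ ball n u \ centeredSquare n u) :
    ((fold n u v).1 - u.1).natAbs ≠ ((fold n u v).2 - u.2).natAbs := by
  rw [mem_ball_sdiff_centeredSquare] at hv
  unfold fold
  split_ifs <;> omega

lemma manhattan_fold_le (hv : v ∈ ball n u \ centeredSquare n u) :
    manhattan u (fold n u v) ≤ manhattan u v := by
  rw [mem_ball_sdiff_centeredSquare] at hv
  rw [manhattan_eq_natAbs, manhattan_eq_natAbs]
  unfold fold
  split_ifs <;> omega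

end

/-- Folding the corners of B_u back into H_u gives an injective, non-surjective,
distance-nonincreasing map from B_u \ H_u into H_u \ {u}. -/
theorem exists_strict_injOn_fold (n : ℤ) (hn : 2 ≤ n) (u : ℤ × ℤ) :
    ∃ g : ℤ × ℤ → ℤ × ℤ,
      Set.MapsTo g (↑(ball n u \ centeredSquare n u)) (↑((centeredSquare n u).erase u)) ∧
      Set.InjOn g (↑(ball n u \ centeredSquare n u)) ∧
      ¬ Set.SurjOn g (↑(ball n u \ centeredSquare n u)) (↑((centeredSquare n u).erase u)) ∧
      ∀ v ∈ ball n u \ centeredSquare n u, manhattan u (g v) ≤ manhattan u v := by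
  refine ⟨fold n u, mapsTo_fold, leftInvOn_unfold_fold.injOn, ?_, fun _ => manhattan_fold_le⟩
  intro hsurj
  have hdiag : u + (1, 1) ∈ (centeredSquare n u).erase u := by
    rw [mem_centeredSquare_erase]
    simp only [Prod.fst_add, Prod.snd_add]
    omega
  obtain ⟨v, hv, hfold⟩ := hsurj hdiag
  apply natAbs_fold_ne hv
  simp only [hfold, Prod.fst_add, Prod.snd_add, add_sub_cancel_left]
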